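/- arXiv:0810.5522 — 2 statements merged into one kernel-verified Lean document; each statement's English description precedes it below -/
import Mathlib

section
/- Let G be a finite simple graph with two adjacent vertices u and v, and let G~ be the graph obtained from G by toggling the adjacency of every pair (t,w) with t ∈ N(u), w ∈ N(v)\N(u), t ≠ w, t,w ∉ {u,v}, and every pair (t,w) with t ∈ N(v), w ∈ N(u)\N(v), t ≠ w, t,w ∉ {u,v} (the pivot operation on the edge {u,v}). If corank(A(G) + E) = 0 over Z_2, then corank(A(G~) + E) = 0. -/
/-!
Over `ZMod 2` the pivot on the edge `uv` is the symmetric rank-two update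
`A(G~) = A(G) + p qᵀ + q pᵀ` with `p = 1_{N(u)} + e_v` and `q = 1_{N(v)} + e_u`.
For `B = A(G) + E` these vectors are `p = B e_u + w` and `q = B e_v + w` with `w = e_u + e_v`,
so the matrix determinant lemma gives `det (A(G~) + E) = det B · δ`, where `δ` is the
determinant of a `2 × 2` matrix whose entries depend only on `t = wᵀ B⁻¹ w`; in
characteristic two `δ = t² - (1 + t)² = 1`.
-/

open Matrix LaurentPolynomial
open scoped Classical

noncomputable section

def adjMatS {V : Type} (G : SimpleGraph V) (s : Finset V) : Matrix s s (ZMod 2) :=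
  fun i j => if G.Adj i.1 j.1 then 1 else 0

def corankS {V : Type} (G : SimpleGraph V) (s : Finset V) : ℕ :=
  s.card - (adjMatS G s).rank

def adjMat {V : Type} [Fintype V] (G : SimpleGraph V) : Matrix V V (ZMod 2) :=
  fun i j => if G.Adj i j then 1 else 0

def corankM {m : Type} [Fintype m] (M : Matrix m m (ZMod 2)) : ℕ :=
  Fintype.card m - M.rank

def alphaCount {V : Type} [Fintype V] (σ : V → Bool) (s : Finset V) : ℕ :=
  (s.filter (fun i => σ i = false)).card + ((sᶜ).filter (fun i => σ i = true)).card

def bracket {V : Type} [Fintype V] (G : SimpleGraph V) (σ : V → Bool) : LaurentPolynomial ℚ :=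
  ∑ s : Finset V, T (2 * (alphaCount σ s : ℤ) - (Fintype.card V : ℤ)) *
    (-T 2 - T (-2)) ^ (corankS G s)

def lspan (p : LaurentPolynomial ℚ) : ℤ := (WithBot.unbotD 0 p.coeff.support.max) - (WithTop.untopD 0 p.coeff.support.min)

def Bmat {V : Type} [Fintype V] (G : SimpleGraph V) (x : V) : Matrix V V (ZMod 2) :=
  adjMat G + 1 + Matrix.single x x 1

def writhe {V : Type} [Fintype V] (G : SimpleGraph V) (σ : V → Bool) : ℤ :=
  ∑ x, (-1 : ℤ) ^ (corankM (Bmat G x)) * (if σ x then 1 else -1)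

def extAdj {V : Type} (G : SimpleGraph V) (N : Set V) : V ⊕ Bool → V ⊕ Bool → Prop
  | .inl i, .inl j => G.Adj i j
  | .inl i, .inr _ => i ∈ N
  | .inr _, .inl j => j ∈ N
  | .inr _, .inr _ => False

def ext2 {V : Type} (G : SimpleGraph V) (N : Set V) : SimpleGraph (V ⊕ Bool) where
  Adj := extAdj G N
  symm := ⟨by
    rintro (i|b) (j|c) h
    · exact G.adj_symm h
    · exact h
    · exact h
    · exact h⟩
  loopless := ⟨by
    rintro (i|b) h
    · exact G.irrefl h
    · exact h⟩

def optExt {V : Type} (G : SimpleGraph V) : SimpleGraph (Option V) where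
  Adj x y := match x, y with
    | some i, some j => G.Adj i j
    | _, _ => False
  symm := ⟨by
    rintro (_|i) (_|j) h
    · exact h
    · exact h
    · exact h
    · exact G.adj_symm h⟩
  loopless := ⟨by
    rintro (_|i) h
    · exact h
    · exact G.irrefl h⟩

/-- One ordered toggle condition for the pivot move on the edge {u,v}:
`x ∈ N(u), y ∈ N(v)\N(u)` or `x ∈ N(v), y ∈ N(u)\N(v)`. -/
def pivotTog {V : Type} (G : SimpleGraph V) (u v x y : V) : Prop :=
  (G.Adj u x ∧ G.Adj v y ∧ ¬ G.Adj u y) ∨ (G.Adj v x ∧ G.Adj u y ∧ ¬ G.Adj v y)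

namespace Matrix

variable {R n : Type*} [CommRing R] [Fintype n] [DecidableEq n]

theorem det_add_vecMulVec_add_vecMulVec {B : Matrix n n R} (hB : IsUnit B.det) (p q : n → R) :
    (B + vecMulVec p q + vecMulVec q p).det =
      B.det * ((1 + q ⬝ᵥ B⁻¹ *ᵥ p) * (1 + p ⬝ᵥ B⁻¹ *ᵥ q) -
        (q ⬝ᵥ B⁻¹ *ᵥ q) * (p ⬝ᵥ B⁻¹ *ᵥ p)) := by
  have hUV : vecMulVec p q + vecMulVec q p = (of ![p, q])ᵀ * of ![q, p] := by
    ext i j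
    simp [vecMulVec_apply, mul_apply, Fin.sum_univ_two]
  have hentry : ∀ i j, (of ![q, p] * B⁻¹ * (of ![p, q])ᵀ) i j = ![q, p] i ⬝ᵥ B⁻¹ *ᵥ ![p, q] j :=
    fun i j => by rw [dotProduct_mulVec, mul_apply']; rfl
  rw [add_assoc, hUV, det_add_mul _ _ hB, det_fin_two]
  simp only [add_apply, hentry, one_apply_eq, one_apply_ne Fin.zero_ne_one,
    one_apply_ne Fin.zero_ne_one.symm]
  simp

theorem dotProduct_nonsing_inv_mulVec_of_isSymm {B : Matrix n n R} (hB : B.IsSymm)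
    (hdet : IsUnit B.det) (a b w : n → R) :
    (B *ᵥ a + w) ⬝ᵥ B⁻¹ *ᵥ (B *ᵥ b + w) =
      a ⬝ᵥ B *ᵥ b + a ⬝ᵥ w + w ⬝ᵥ b + w ⬝ᵥ B⁻¹ *ᵥ w := by
  have hBa : B *ᵥ a = a ᵥ* B := by rw [← mulVec_transpose, hB.eq]
  rw [mulVec_add, mulVec_mulVec, nonsing_inv_mul _ hdet, one_mulVec, hBa, add_dotProduct,
    dotProduct_add, dotProduct_add, ← dotProduct_mulVec, ← dotProduct_mulVec, mulVec_mulVec,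
    mul_nonsing_inv _ hdet, one_mulVec]
  ring

theorem det_add_vecMulVec_pivot [CharP R 2] {B : Matrix n n R} (hB : B.IsSymm)
    (hdet : IsUnit B.det) {x y w : n → R} (hxx : x ⬝ᵥ B *ᵥ x = 1) (hxy : x ⬝ᵥ B *ᵥ y = 1)
    (hyy : y ⬝ᵥ B *ᵥ y = 1) (hxw : x ⬝ᵥ w = 1) (hyw : y ⬝ᵥ w = 1) :
    (B + vecMulVec (B *ᵥ x + w) (B *ᵥ y + w) + vecMulVec (B *ᵥ y + w) (B *ᵥ x + w)).det =
      B.det := by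
  have hyx : y ⬝ᵥ B *ᵥ x = 1 := by
    rw [dotProduct_mulVec, ← mulVec_transpose, hB.eq, dotProduct_comm, hxy]
  rw [det_add_vecMulVec_add_vecMulVec hdet]
  simp only [dotProduct_nonsing_inv_mulVec_of_isSymm hB hdet, dotProduct_comm w x,
    dotProduct_comm w y, hxx, hxy, hyx, hyy, hxw, hyw]
  -- each of the four bilinear values is now `1 + 1 + 1 + wᵀ B⁻¹ w`
  linear_combination B.det * (3 + w ⬝ᵥ B⁻¹ *ᵥ w) * CharTwo.two_eq_zero (R := R)

end Matrix

theorem corankM_eq_zero_iff_isUnit {m : Type} [Fintype m] (M : Matrix m m (ZMod 2)) :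
    corankM M = 0 ↔ IsUnit M := by
  refine ⟨fun h => ?_, fun h => by rw [corankM, rank_of_isUnit M h, Nat.sub_self]⟩
  have hrank : M.rank = Fintype.card m := by
    have := M.rank_le_card_width
    unfold corankM at h
    omega
  have hrange : LinearMap.range M.mulVecLin = ⊤ :=
    Submodule.eq_top_of_finrank_eq (by rw [← rank, hrank, Module.finrank_fintype_fun_eq_card])
  exact mulVec_surjective_iff_isUnit.mp (LinearMap.range_eq_top.mp hrange)

section Pivot

variable {V : Type} [Fintype V]

theorem adjMat_isSymm (G : SimpleGraph V) : (adjMat G).IsSymm := by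
  ext i j
  simp [adjMat, G.adj_comm]

def pivotVec (G : SimpleGraph V) (u v : V) : V → ZMod 2 :=
  adjMat G u + Pi.single v 1

theorem pivotVec_eq_mulVec_add (G : SimpleGraph V) (u v : V) :
    pivotVec G u v = (adjMat G + 1) *ᵥ Pi.single u 1 + (Pi.single u 1 + Pi.single v 1) := by
  ext x
  have hsymm : adjMat G x u = adjMat G u x := (adjMat_isSymm G).apply u x
  simp only [pivotVec, mulVec_single_one, Pi.add_apply, col_apply, Matrix.add_apply, hsymm,
    one_apply, Pi.single_apply]
  linear_combination -CharTwo.add_self_eq_zero (if x = u then (1 : ZMod 2) else 0)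

theorem pivot_toggle_indicator (G : SimpleGraph V) {u v : V} (huv : G.Adj u v) (x y : V) :
    (if x ≠ u ∧ x ≠ v ∧ y ≠ u ∧ y ≠ v ∧ x ≠ y ∧ (pivotTog G u v x y ∨ pivotTog G u v y x)
      then (1 : ZMod 2) else 0) =
      pivotVec G u v x * pivotVec G v u y + pivotVec G v u x * pivotVec G u v y := by
  have hne : u ≠ v := G.ne_of_adj huv
  by_cases hxy : x = y
  · subst hxy
    rw [if_neg (by tauto), mul_comm]
    exact (CharTwo.add_self_eq_zero _).symm
  simp only [pivotVec, Pi.add_apply, adjMat, Pi.single_apply]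
  by_cases hxu : x = u
  · subst hxu
    simp [hne, huv.symm, Ne.symm hxy, CharTwo.add_self_eq_zero]
  by_cases hxv : x = v
  · subst hxv
    simp [hne.symm, huv, Ne.symm hxy, CharTwo.add_self_eq_zero]
  by_cases hyu : y = u
  · subst hyu
    simp [hne, huv.symm, hxu, hxv, CharTwo.add_self_eq_zero]
  by_cases hyv : y = v
  · subst hyv
    simp [hne.symm, huv, hxu, hxv, CharTwo.add_self_eq_zero]
  by_cases h1 : G.Adj u x <;> by_cases h2 : G.Adj v x <;>
    by_cases h3 : G.Adj u y <;> by_cases h4 : G.Adj v y <;>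
    simp [pivotTog, hxu, hxv, hyu, hyv, hxy, h1, h2, h3, h4, CharTwo.add_self_eq_zero]

theorem adjMat_eq_add_vecMulVec_of_pivot {G H : SimpleGraph V} {u v : V} (huv : G.Adj u v)
    (hH : ∀ x y, H.Adj x y ↔
      Xor' (G.Adj x y)
        (x ≠ u ∧ x ≠ v ∧ y ≠ u ∧ y ≠ v ∧ x ≠ y ∧
          (pivotTog G u v x y ∨ pivotTog G u v y x))) :
    adjMat H = adjMat G + vecMulVec (pivotVec G u v) (pivotVec G v u) +
      vecMulVec (pivotVec G v u) (pivotVec G u v) := by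
  ext x y
  rw [add_assoc, Matrix.add_apply, Matrix.add_apply, vecMulVec_apply, vecMulVec_apply,
    ← pivot_toggle_indicator G huv]
  simp only [adjMat, hH]
  split_ifs <;> simp_all [Xor', CharTwo.add_self_eq_zero]

end Pivot

/-- Ω_g4 (pivot) preserves corank(A+E)=0. -/
theorem corank_AE_pivot {V : Type} [Fintype V] (G H : SimpleGraph V)
    (u v : V) (huv : G.Adj u v)
    (hH : ∀ x y, H.Adj x y ↔
      Xor' (G.Adj x y)
        (x ≠ u ∧ x ≠ v ∧ y ≠ u ∧ y ≠ v ∧ x ≠ y ∧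
          (pivotTog G u v x y ∨ pivotTog G u v y x)))
    (h : corankM (adjMat G + 1) = 0) :
    corankM (adjMat H + 1) = 0 := by
  have hB : (adjMat G + 1).IsSymm := (adjMat_isSymm G).add isSymm_one
  have hdet : IsUnit (adjMat G + 1).det :=
    (isUnit_iff_isUnit_det _).mp ((corankM_eq_zero_iff_isUnit _).mp h)
  have hne : u ≠ v := G.ne_of_adj huv
  have hq := pivotVec_eq_mulVec_add G v u
  rw [add_comm (Pi.single v 1)] at hq
  rw [corankM_eq_zero_iff_isUnit, isUnit_iff_isUnit_det, adjMat_eq_add_vecMulVec_of_pivot huv hH,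
    add_right_comm _ _ 1, add_right_comm (adjMat G), pivotVec_eq_mulVec_add, hq,
    det_add_vecMulVec_pivot hB hdet]
  · exact hdet
  all_goals simp [adjMat, huv, hne]
end
end

section
/- Let G be a labeled finite simple graph and let G~ be obtained from G by the second Reidemeister graph-move Ω_g2: adding two non-adjacent vertices u (labeled +) and v (labeled −) that have identical neighborhoods in G. Then ⟨G~⟩ = ⟨G⟩, i.e., the Kauffman bracket polynomial is invariant under Ω_g2. -/
open Matrix LaurentPolynomial
open scoped Classical

noncomputable section

/-!
Split each state of the extended graph into its trace `s` on `V` and its trace on the twins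
`{u, v}`. With neither twin we recover the term of `s` in `⟨G⟩`. Since `u` and `v` have the same
neighbourhood, `s ∪ {u}` and `s ∪ {v}` have the same corank `c`, and `s ∪ {u, v}` has corank
`c + 1` (two equal rows). Their weights are `a²`, `a⁻²` and `δ = -a² - a⁻²` times a common
factor, so these three terms cancel.
-/

open Finset

theorem Matrix.rank_submatrix_of_surjective {R m n : Type*} [CommSemiring R]
    [StrongRankCondition R] [Fintype m] [Fintype n] (A : Matrix m m R) {f : n → m}
    (hf : f.Surjective) : (A.submatrix f f).rank = A.rank := by
  refine le_antisymm (A.rank_submatrix_le f f) ?_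
  calc A.rank
      = ((A.submatrix f f).submatrix (Function.surjInv hf) (Function.surjInv hf)).rank := by
        rw [submatrix_submatrix, (Function.rightInverse_surjInv hf).comp_eq_id, submatrix_id_id]
    _ ≤ (A.submatrix f f).rank := rank_submatrix_le _ _ _

/-- Vertices with the same image under `g` are twins in `H.comap g`; each twin beyond the first
duplicates a row of the adjacency matrix, adding one to the corank. -/
theorem corankS_comap {W W' : Type} [DecidableEq W'] (H : SimpleGraph W') (g : W → W')
    (s : Finset W) :
    corankS (H.comap g) s = corankS H (s.image g) + (#s - #(s.image g)) := by
  let f : s → s.image g := fun x => ⟨g x, mem_image_of_mem g x.2⟩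
  have hf : f.Surjective := by
    rintro ⟨_, hy⟩
    obtain ⟨x, hx, rfl⟩ := mem_image.mp hy
    exact ⟨⟨x, hx⟩, rfl⟩
  have hmat : adjMatS (H.comap g) s = (adjMatS H (s.image g)).submatrix f f := rfl
  have hrank : (adjMatS (H.comap g) s).rank = (adjMatS H (s.image g)).rank := by
    rw [hmat, rank_submatrix_of_surjective _ hf]
  have hwidth := (adjMatS H (s.image g)).rank_le_card_width
  have himage := card_image_le (s := s) (f := g)
  simp only [Fintype.card_coe] at hwidth
  unfold corankS
  omega

theorem Finset.image_disjSum {α β γ δ : Type*} [DecidableEq γ] [DecidableEq δ] (s : Finset α)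
    (t : Finset β) (f : α → γ) (g : β → δ) :
    (s.disjSum t).image (Sum.map f g) = (s.image f).disjSum (t.image g) := by
  ext (c | d) <;> simp

theorem Finset.compl_disjSum {α β : Type*} [Fintype α] [Fintype β] [DecidableEq α] [DecidableEq β]
    [DecidableEq (α ⊕ β)] (s : Finset α) (t : Finset β) : (s.disjSum t)ᶜ = sᶜ.disjSum tᶜ := by
  ext (a | b) <;> simp

theorem Finset.filter_disjSum {α β : Type*} (p : α ⊕ β → Prop) [DecidablePred p] (s : Finset α)
    (t : Finset β) :
    (s.disjSum t).filter p
      = (s.filter fun a => p (.inl a)).disjSum (t.filter fun b => p (.inr b)) := by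
  ext (a | b) <;> simp

theorem alphaCount_elim_disjSum {α β : Type} [Fintype α] [Fintype β] (σ : α → Bool)
    (τ : β → Bool) (s : Finset α) (t : Finset β) :
    alphaCount (Sum.elim σ τ) (s.disjSum t) = alphaCount σ s + alphaCount τ t := by
  simp only [alphaCount, compl_disjSum, filter_disjSum, card_disjSum, Sum.elim_inl, Sum.elim_inr]
  rw [Nat.add_add_add_comm]
  rfl

theorem alphaCount_bool (t : Finset Bool) :
    alphaCount (fun c => c) t = (if false ∈ t then 1 else 0) + (if true ∈ t then 0 else 1) := by
  unfold alphaCount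
  -- `tᶜ` in `alphaCount` uses the classical `DecidableEq`; `convert` swaps in the computable one.
  convert (by decide : ∀ t : Finset Bool, #(t.filter (· = false)) + #(tᶜ.filter (· = true))
    = (if false ∈ t then 1 else 0) + (if true ∈ t then 0 else 1)) t

theorem sum_finset_bool {M : Type*} [AddCommMonoid M] (F : Finset Bool → M) :
    ∑ t, F t = F ∅ + F {false} + F {true} + F {false, true} := by
  rw [show (Finset.univ : Finset (Finset Bool)) = {∅, {false}, {true}, {false, true}} by decide,
    sum_insert (by decide), sum_insert (by decide), sum_insert (by decide), sum_singleton]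
  abel

/-- The contributions of `s ∪ {v}`, `s ∪ {u}` and `s ∪ {u, v}` for a state `s` of `G`. -/
theorem T_twin_cancel {R : Type*} [CommRing R] (a : ℤ) (c : ℕ) :
    T (a + 2) * (-T 2 - T (-2) : R[T;T⁻¹]) ^ c + T (a - 2) * (-T 2 - T (-2)) ^ c
      + T a * (-T 2 - T (-2)) ^ (c + 1) = 0 := by
  rw [T_add, T_sub, pow_succ]
  ring

section Omega2

variable {V : Type} (G : SimpleGraph V) (N : Set V)

theorem ext2_comap_inl : (ext2 G N).comap Sum.inl = G := rfl

theorem ext2_comap_map_id (φ : Bool → Bool) : (ext2 G N).comap (Sum.map id φ) = ext2 G N := by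
  ext (a | b) (c | d) <;> rfl

theorem corankS_ext2_disjSum_empty (s : Finset V) :
    corankS (ext2 G N) (s.disjSum ∅) = corankS G s := by
  conv_rhs => rw [← ext2_comap_inl G N, corankS_comap]
  rw [card_image_of_injective _ Sum.inl_injective, Nat.sub_self, add_zero, disjSum_empty,
    map_eq_image]
  rfl

theorem corankS_ext2_disjSum_image (φ : Bool → Bool) (s : Finset V) (t : Finset Bool) :
    corankS (ext2 G N) (s.disjSum t)
      = corankS (ext2 G N) (s.disjSum (t.image φ)) + (#t - #(t.image φ)) := by
  conv_lhs => rw [← ext2_comap_map_id G N φ, corankS_comap]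
  rw [image_disjSum, image_id, card_disjSum, card_disjSum, Nat.add_sub_add_left]

theorem sum_bracket_term_disjSum_twins [Fintype V] (σ : V → Bool) (s : Finset V) :
    ∑ t : Finset Bool, T (R := ℚ) (2 * (alphaCount (Sum.elim σ fun c => c) (s.disjSum t) : ℤ)
        - Fintype.card (V ⊕ Bool)) * (-T 2 - T (-2)) ^ corankS (ext2 G N) (s.disjSum t)
      = T (2 * (alphaCount σ s : ℤ) - Fintype.card V) * (-T 2 - T (-2)) ^ corankS G s := by
  have hswap :
      corankS (ext2 G N) (s.disjSum {false}) = corankS (ext2 G N) (s.disjSum {true}) := by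
    simpa using corankS_ext2_disjSum_image G N not s {false}
  have hpair : corankS (ext2 G N) (s.disjSum {false, true})
      = corankS (ext2 G N) (s.disjSum {true}) + 1 := by
    simpa using corankS_ext2_disjSum_image G N (fun _ => true) s {false, true}
  rw [sum_finset_bool, corankS_ext2_disjSum_empty, hswap, hpair]
  simp only [alphaCount_elim_disjSum, alphaCount_bool, Fintype.card_sum, Fintype.card_bool]
  norm_num
  generalize (alphaCount σ s : ℤ) = α
  generalize (Fintype.card V : ℤ) = n
  rw [show 2 * (α + 1) - (n + 2) = 2 * α - n by ring,
    show 2 * (α + 2) - (n + 2) = 2 * α - n + 2 by ring,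
    show 2 * α - (n + 2) = 2 * α - n - 2 by ring]
  linear_combination T_twin_cancel (R := ℚ) (2 * α - n) (corankS (ext2 G N) (s.disjSum {true}))

end Omega2

/-- The added twins are `u = inr true`, labeled `+`, and `v = inr false`, labeled `-`. -/
theorem bracket_omega2 {V : Type} [Fintype V] (G : SimpleGraph V) (N : Set V)
    (σ : V → Bool) :
    bracket (ext2 G N) (Sum.elim σ (fun c => c)) = bracket G σ := by
  unfold bracket
  rw [← (sumEquiv.toEquiv.symm).sum_comp, Fintype.sum_prod_type]
  exact sum_congr rfl fun s _ => sum_bracket_term_disjSum_twins G N σ s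
end
end
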